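/- arXiv:2510.22377 — 2 statements merged into one kernel-verified Lean document; each statement's English description precedes it below -/
import Mathlib

section
/- Let α ∈ (0,1) be irrational and let w : ℕ → {a,b} be a right-infinite Sturmian word whose frequency of the letter b equals α, i.e., (1/n)·#{i < n : w(i) = b} → α as n → ∞. Let c_α be the characteristic word of slope α. Then for every finite word s over {a,b}: both s·a and s·b (the words obtained from s by appending the letter a, respectively b, at the end) are factors of w if and only if the reversal of s is a prefix of c_α. -/
/-!
Balancedness and the frequency `α` force every window of length `n` of `w` to contain `nα ± 1`
letters `b`, so the discrepancy `#b(w[0, m)) - mα` ranges in an interval of length at most one,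
with strict inequalities by irrationality. Hence each factor of `w` is a prefix of a lower
mechanical word `n ↦ ⌊(n+1)α + ρ⌋ - ⌊nα + ρ⌋`; conversely `w` eventually agrees with one such word
and the intercepts `iα + c` are dense modulo one, so every prefix of a mechanical word is a factor
of `w`. Along the intercept `ρ`, the letter following a prefix `s` of length `n` switches from `a`
to `b` exactly at the points `M - (n+1)α`, and there the `j`-th letter of `s` is
`⌊(k+2)α⌋ - ⌊(k+1)α⌋` with `j + k + 1 = n`: `s` is the reversal of a prefix of `c_α`.
-/

namespace StringBricks

def IsFactor (w : ℕ → Bool) (u : List Bool) : Prop :=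
  ∃ i : ℕ, ∀ j : Fin u.length, w (i + j) = u.get j

def BalancedWord (w : ℕ → Bool) : Prop :=
  ∀ u v : List Bool, IsFactor w u → IsFactor w v → u.length = v.length →
    |(u.count true : ℤ) - (v.count true : ℤ)| ≤ 1

def EventuallyPeriodic (w : ℕ → Bool) : Prop :=
  ∃ N p : ℕ, 1 ≤ p ∧ ∀ n : ℕ, N ≤ n → w (n + p) = w n

def SturmianWord (w : ℕ → Bool) : Prop :=
  BalancedWord w ∧ ¬ EventuallyPeriodic w

noncomputable def charWord (α : ℝ) : ℕ → Bool :=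
  fun n => decide (⌊((n : ℝ) + 2) * α⌋ - ⌊((n : ℝ) + 1) * α⌋ = 1)

/-- `u` is a prefix of the right-infinite word `w`. -/
def IsPrefixOf (u : List Bool) (w : ℕ → Bool) : Prop :=
  ∀ j : Fin u.length, w j = u.get j

open Filter Topology

section Prefix

variable {u s : List Bool} {v v' : ℕ → Bool}

theorem isPrefixOf_iff : IsPrefixOf u v ↔ ∀ j (hj : j < u.length), v j = u[j] :=
  ⟨fun h j hj => h ⟨j, hj⟩, fun h j => h j j.isLt⟩

theorem isPrefixOf_congr (h : ∀ j < u.length, v j = v' j) :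
    IsPrefixOf u v ↔ IsPrefixOf u v' := by
  simp only [isPrefixOf_iff]
  exact forall₂_congr fun j hj => by rw [h j hj]

theorem isPrefixOf_append_singleton_iff {b : Bool} :
    IsPrefixOf (s ++ [b]) v ↔ IsPrefixOf s v ∧ v s.length = b := by
  simp only [isPrefixOf_iff, List.length_append, List.length_singleton]
  constructor
  · intro h
    refine ⟨fun j hj => by rw [h j (by omega), List.getElem_append_left hj], by simp [h]⟩
  · rintro ⟨hs, hb⟩ j hj
    rcases Nat.lt_succ_iff_lt_or_eq.1 hj with hj | rfl
    · rw [hs j hj, List.getElem_append_left hj]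
    · simp [hb]

theorem isPrefixOf_reverse_iff (h : ∀ j k, j + k + 1 = s.length → v' j = v k) :
    IsPrefixOf s.reverse v ↔ IsPrefixOf s v' := by
  simp only [isPrefixOf_iff, List.length_reverse, List.getElem_reverse]
  constructor
  · intro hs j hj
    rw [h j (s.length - 1 - j) (by omega), hs _ (by omega)]
    congr 1
    omega
  · intro hs k hk
    rw [← h (s.length - 1 - k) k (by omega), hs]

end Prefix

section Weight

variable {w : ℕ → Bool}

def prefixWeight (w : ℕ → Bool) (n : ℕ) : ℕ :=
  ((Finset.range n).filter fun i => w i = true).card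

theorem prefixWeight_succ (n : ℕ) : prefixWeight w (n + 1) = prefixWeight w n + (w n).toNat := by
  unfold prefixWeight
  rw [Finset.range_add_one, Finset.filter_insert]
  cases w n <;> simp [Finset.card_insert_of_notMem]

def window (w : ℕ → Bool) (i n : ℕ) : List Bool := (List.range n).map fun k => w (i + k)

theorem isFactor_window (i n : ℕ) : IsFactor w (window w i n) :=
  ⟨i, fun ⟨j, hj⟩ => by simp [window]⟩

theorem prefixWeight_add (i n : ℕ) :
    prefixWeight w (i + n) = prefixWeight w i + (window w i n).count true := by
  induction n with
  | zero => simp [window]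
  | succ n ih =>
    rw [← add_assoc, prefixWeight_succ, ih]
    simp only [window, List.range_succ, List.map_append, List.count_append, add_assoc]
    cases h : w (i + n) <;> simp [h]

theorem BalancedWord.abs_window_sub_le (hw : BalancedWord w) (i j n : ℕ) :
    |((prefixWeight w (i + n) : ℤ) - prefixWeight w i) -
      ((prefixWeight w (j + n) : ℤ) - prefixWeight w j)| ≤ 1 := by
  simpa [prefixWeight_add, window] using
    hw _ _ (isFactor_window i n) (isFactor_window j n) (by simp [window])

end Weight

section Frequency

variable {w : ℕ → Bool} {α : ℝ}

theorem BalancedWord.abs_window_sub_mul_le (hw : BalancedWord w)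
    (hfreq : Tendsto (fun n : ℕ => (prefixWeight w n : ℝ) / n) atTop (𝓝 α)) (j n : ℕ) :
    |((prefixWeight w (j + n) : ℝ) - prefixWeight w j) - n * α| ≤ 1 := by
  rcases n.eq_zero_or_pos with rfl | hn
  · simp
  set h : ℝ := (prefixWeight w (j + n) : ℝ) - prefixWeight w j
  -- `w[0, tn)` is cut into `t` windows of length `n`, each carrying `h ± 1` letters `b`
  have hblock : ∀ t : ℕ, |(prefixWeight w (t * n) : ℝ) - t * h| ≤ t := by
    intro t
    induction t with
    | zero => simp [prefixWeight]
    | succ t ih =>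
      have hstep : |((prefixWeight w (t * n + n) : ℝ) - prefixWeight w (t * n)) - h| ≤ 1 := by
        have := hw.abs_window_sub_le (t * n) j n
        simp only [h]
        exact_mod_cast this
      rw [add_mul, one_mul]
      push_cast
      calc _ = |((prefixWeight w (t * n) : ℝ) - t * h) +
              (((prefixWeight w (t * n + n) : ℝ) - prefixWeight w (t * n)) - h)| := by ring_nf
        _ ≤ t + 1 := (abs_add_le _ _).trans (add_le_add ih hstep)
  have hmul : Tendsto (fun t : ℕ => t * n) atTop atTop :=
    tendsto_atTop_mono (fun t => Nat.le_mul_of_pos_right t hn) tendsto_id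
  have hlim : Tendsto (fun t : ℕ => (prefixWeight w (t * n) : ℝ) / t) atTop (𝓝 (n * α)) := by
    refine ((hfreq.comp hmul).const_mul (n : ℝ)).congr' ?_
    filter_upwards [eventually_ne_atTop 0] with t ht
    simp only [Function.comp_apply, Nat.cast_mul]
    field_simp
  rw [abs_sub_comm]
  refine le_of_tendsto ((hlim.sub_const h).abs) ?_
  filter_upwards [eventually_gt_atTop 0] with t ht
  have ht' : (0 : ℝ) < t := Nat.cast_pos.2 ht
  rw [div_sub' ht'.ne', abs_div, abs_of_pos ht', div_le_one ht']
  convert hblock t using 3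

def discrepancy (w : ℕ → Bool) (α : ℝ) (m : ℕ) : ℝ := prefixWeight w m - m * α

theorem BalancedWord.abs_discrepancy_sub_le (hw : BalancedWord w)
    (hfreq : Tendsto (fun n : ℕ => (prefixWeight w n : ℝ) / n) atTop (𝓝 α)) (m m' : ℕ) :
    |discrepancy w α m - discrepancy w α m'| ≤ 1 := by
  wlog hle : m' ≤ m generalizing m m'
  · rw [abs_sub_comm]
    exact this m' m (by omega)
  obtain ⟨n, rfl⟩ := Nat.exists_eq_add_of_le hle
  convert hw.abs_window_sub_mul_le hfreq m' n using 2
  simp only [discrepancy]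
  push_cast
  ring

theorem BalancedWord.discrepancy_sub_lt_one (hw : BalancedWord w) (hirr : Irrational α)
    (hfreq : Tendsto (fun n : ℕ => (prefixWeight w n : ℝ) / n) atTop (𝓝 α)) (m m' : ℕ) :
    discrepancy w α m - discrepancy w α m' < 1 := by
  rcases eq_or_ne m m' with rfl | hne
  · simp
  refine (le_abs_self _).trans (hw.abs_discrepancy_sub_le hfreq m m') |>.lt_of_ne fun heq => ?_
  -- equality would make `(m - m') α` an integer
  refine (hirr.intCast_mul (sub_ne_zero.2 (Int.natCast_inj.not.2 hne))).ne_int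
    (prefixWeight w m - prefixWeight w m' - 1) ?_
  simp only [discrepancy] at heq
  push_cast
  linarith

end Frequency

theorem _root_.Irrational.frequently_nat_mul_add_intCast_mem_Ioo {α : ℝ} (hirr : Irrational α)
    {a b : ℝ} (hab : a < b) : ∃ᶠ n : ℕ in atTop, ∃ z : ℤ, (n : ℝ) * α + z ∈ Set.Ioo a b := by
  have hdense : DenseRange (· • (α : AddCircle (1 : ℝ)) : ℤ → AddCircle (1 : ℝ)) :=
    AddCircle.denseRange_zsmul_coe_iff.2 (by simpa using hirr)
  -- in the compact circle, the `ℕ`-multiples accumulate wherever the `ℤ`-multiples do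
  have hcluster : MapClusterPt (((a + b) / 2 : ℝ) : AddCircle (1 : ℝ)) atTop
      (· • (α : AddCircle (1 : ℝ)) : ℕ → AddCircle (1 : ℝ)) :=
    (mapClusterPt_atTop_nsmul_tfae _ _).out 0 3 |>.2 (by rw [hdense.closure_range]; trivial)
  have hopen : IsOpen (((↑) : ℝ → AddCircle (1 : ℝ)) '' Set.Ioo a b) :=
    QuotientAddGroup.isOpenMap_coe _ isOpen_Ioo
  refine (hcluster.frequently (hopen.mem_nhds ⟨_, ⟨by linarith, by linarith⟩, rfl⟩)).mono ?_
  rintro n ⟨t, ht, hnt⟩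
  obtain ⟨z, hz⟩ := AddSubgroup.mem_zmultiples_iff.1 (QuotientAddGroup.eq_iff_sub_mem.1 hnt)
  refine ⟨z, ?_⟩
  convert ht using 1
  simp only [zsmul_eq_mul, mul_one, nsmul_eq_mul] at hz
  linarith

section Mechanical

variable {α ρ : ℝ}

-- the lower mechanical word of slope `α` and intercept `ρ`, with `b = true`
noncomputable def mechWord (α ρ : ℝ) (n : ℕ) : Bool :=
  decide (⌊((n : ℝ) + 1) * α + ρ⌋ - ⌊(n : ℝ) * α + ρ⌋ = 1)

theorem mechWord_add_intCast (z : ℤ) : mechWord α (ρ + z) = mechWord α ρ := by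
  funext n
  simp only [mechWord, ← add_assoc, Int.floor_add_intCast, add_sub_add_right_eq_sub]

theorem mechWord_fract : mechWord α (Int.fract ρ) = mechWord α ρ := by
  rw [Int.fract, sub_eq_add_neg, ← Int.cast_neg, mechWord_add_intCast]

theorem mechWord_add (i j : ℕ) : mechWord α ρ (i + j) = mechWord α (i * α + ρ) j := by
  simp only [mechWord, Nat.cast_add]
  ring_nf

theorem mechWord_eq_of_floor_eq {x y : ℝ} {j : ℕ} (h₀ : ⌊(j : ℝ) * α + x⌋ = ⌊(j : ℝ) * α + y⌋)
    (h₁ : ⌊((j : ℝ) + 1) * α + x⌋ = ⌊((j : ℝ) + 1) * α + y⌋) :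
    mechWord α x j = mechWord α y j := by
  simp only [mechWord, h₀, h₁]

theorem mechWord_eq_of_floor_succ_eq {j : ℕ} {b : Bool}
    (h : ⌊((j : ℝ) + 1) * α + ρ⌋ = ⌊(j : ℝ) * α + ρ⌋ + b.toNat) : mechWord α ρ j = b := by
  cases b <;> simp [mechWord, h]

theorem floor_succ_mul_add (h0 : 0 ≤ α) (h1 : α ≤ 1) (ρ : ℝ) (k : ℕ) :
    ⌊((k : ℝ) + 1) * α + ρ⌋ = ⌊(k : ℝ) * α + ρ⌋ + (mechWord α ρ k).toNat := by
  have hlo : ⌊(k : ℝ) * α + ρ⌋ ≤ ⌊((k : ℝ) + 1) * α + ρ⌋ := Int.floor_mono (by nlinarith)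
  have hhi : ⌊((k : ℝ) + 1) * α + ρ⌋ ≤ ⌊(k : ℝ) * α + ρ⌋ + 1 := by
    rw [← Int.floor_add_one]
    exact Int.floor_mono (by nlinarith)
  by_cases h : ⌊((k : ℝ) + 1) * α + ρ⌋ - ⌊(k : ℝ) * α + ρ⌋ = 1 <;>
    simp only [mechWord, h, decide_true, decide_false, Bool.toNat_true, Bool.toNat_false] <;> omega

end Mechanical

section Factors

variable {w : ℕ → Bool} {α : ℝ} {u : List Bool}

theorem BalancedWord.exists_floor_eq_window (hw : BalancedWord w) (hirr : Irrational α)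
    (hfreq : Tendsto (fun n : ℕ => (prefixWeight w n : ℝ) / n) atTop (𝓝 α)) (i n : ℕ) :
    ∃ ρ : ℝ, ∀ k ≤ n, ⌊(k : ℝ) * α + ρ⌋ = (prefixWeight w (i + k) : ℤ) - prefixWeight w i := by
  set d : ℕ → ℝ := fun k => discrepancy w α (i + k) - discrepancy w α i
  obtain ⟨K, -, hK⟩ := (Finset.range (n + 1)).exists_max_image d ⟨0, by simp⟩
  -- all `d k` lie in `(d K - 1, d K]`, so `d K` is a common intercept
  refine ⟨d K, fun k hk => Int.floor_eq_iff.2 ?_⟩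
  have hle : d k ≤ d K := hK k (by simp; omega)
  have hlt : d K - d k < 1 := by
    simpa [d] using hw.discrepancy_sub_lt_one hirr hfreq (i + K) (i + k)
  simp only [d, discrepancy] at hle hlt ⊢
  push_cast at hle hlt ⊢
  constructor <;> linarith

theorem BalancedWord.exists_isPrefixOf_mechWord (hw : BalancedWord w) (hirr : Irrational α)
    (hfreq : Tendsto (fun n : ℕ => (prefixWeight w n : ℝ) / n) atTop (𝓝 α))
    (hu : IsFactor w u) : ∃ ρ, IsPrefixOf u (mechWord α ρ) := by
  obtain ⟨i, hi⟩ := hu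
  obtain ⟨ρ, hρ⟩ := hw.exists_floor_eq_window hirr hfreq i u.length
  refine ⟨ρ, (isPrefixOf_congr (v := fun j => w (i + j)) fun j hj => ?_).1 hi⟩
  symm
  apply mechWord_eq_of_floor_succ_eq
  have h₀ := hρ j hj.le
  have h₁ := hρ (j + 1) (by omega)
  rw [← add_assoc, prefixWeight_succ] at h₁
  push_cast at h₁
  rw [h₀, h₁]
  ring

theorem BalancedWord.exists_discrepancy_mem_Icc (hw : BalancedWord w) (hirr : Irrational α)
    (hfreq : Tendsto (fun n : ℕ => (prefixWeight w n : ℝ) / n) atTop (𝓝 α)) :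
    ∃ c, ∀ m, discrepancy w α m ∈ Set.Icc c (c + 1) := by
  have hbdd : BddBelow (Set.range (discrepancy w α)) := by
    refine ⟨discrepancy w α 0 - 1, ?_⟩
    rintro _ ⟨m, rfl⟩
    linarith [abs_le.1 (hw.abs_discrepancy_sub_le hfreq 0 m)]
  refine ⟨⨅ m, discrepancy w α m, fun m => ⟨ciInf_le hbdd m, ?_⟩⟩
  have : discrepancy w α m - 1 ≤ ⨅ m', discrepancy w α m' :=
    le_ciInf fun m' => by linarith [hw.discrepancy_sub_lt_one hirr hfreq m m']
  linarith

theorem prefixWeight_eq_floor_add_one {c : ℝ} {m : ℕ}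
    (hc : discrepancy w α m ∈ Set.Icc c (c + 1)) (hm : ∀ z : ℤ, (m : ℝ) * α + c ≠ z) :
    (prefixWeight w m : ℤ) = ⌊(m : ℝ) * α + c⌋ + 1 := by
  have hne := hm (prefixWeight w m)
  simp only [discrepancy, Set.mem_Icc] at hc
  push_cast at hne
  rw [eq_comm, ← eq_sub_iff_add_eq, Int.floor_eq_iff]
  push_cast
  constructor
  · linarith
  · simpa using lt_of_le_of_ne (by linarith) hne

theorem _root_.Irrational.eventually_mul_add_ne_intCast (hirr : Irrational α) (c : ℝ) :
    ∀ᶠ m : ℕ in atTop, ∀ z : ℤ, (m : ℝ) * α + c ≠ z := by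
  by_cases h : ∃ (m₀ : ℕ) (z₀ : ℤ), (m₀ : ℝ) * α + c = z₀
  · obtain ⟨m₀, z₀, h₀⟩ := h
    filter_upwards [eventually_gt_atTop m₀] with m hm z hz
    refine (hirr.natCast_mul (m := m - m₀) (by omega)).ne_int (z - z₀) ?_
    rw [Nat.cast_sub hm.le]
    push_cast
    linarith
  · push Not at h
    exact Eventually.of_forall fun m => h m

theorem BalancedWord.exists_eventually_eq_mechWord (hw : BalancedWord w) (hirr : Irrational α)
    (hfreq : Tendsto (fun n : ℕ => (prefixWeight w n : ℝ) / n) atTop (𝓝 α)) :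
    ∃ c, ∀ᶠ m in atTop, w m = mechWord α c m := by
  obtain ⟨c, hc⟩ := hw.exists_discrepancy_mem_Icc hirr hfreq
  refine ⟨c, ?_⟩
  have hne := hirr.eventually_mul_add_ne_intCast c
  filter_upwards [hne, (tendsto_add_atTop_nat 1).eventually hne] with m hm hm₁
  symm
  apply mechWord_eq_of_floor_succ_eq
  have h₀ := prefixWeight_eq_floor_add_one (hc m) hm
  have h₁ := prefixWeight_eq_floor_add_one (hc (m + 1)) hm₁
  rw [prefixWeight_succ] at h₁
  push_cast at h₁
  linarith

theorem BalancedWord.isFactor_of_isPrefixOf_mechWord (hw : BalancedWord w) (hirr : Irrational α)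
    (hfreq : Tendsto (fun n : ℕ => (prefixWeight w n : ℝ) / n) atTop (𝓝 α)) {ρ : ℝ}
    (hu : IsPrefixOf u (mechWord α ρ)) : IsFactor w u := by
  obtain ⟨c, hc⟩ := hw.exists_eventually_eq_mechWord hirr hfreq
  obtain ⟨N, hN⟩ := eventually_atTop.1 hc
  -- floors are right-continuous, so intercepts slightly above `ρ` give the same prefix
  have hright : ∀ᶠ z in 𝓝[≥] ρ, ∀ k ∈ Finset.range (u.length + 1),
      ⌊(k : ℝ) * α + z⌋ = ⌊(k : ℝ) * α + ρ⌋ := by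
    refine (Filter.eventually_all_finset _).2 fun k _ => tendsto_pure.1 ?_
    exact (tendsto_floor_right_pure_floor _).comp <|
      (continuous_const_add _).continuousWithinAt.tendsto_nhdsWithin fun z hz => by simpa using hz
  obtain ⟨b, hb, hρb⟩ := (nhdsGE_basis ρ).eventually_iff.1 hright
  obtain ⟨i, ⟨z, hz⟩, hiN⟩ := ((hirr.frequently_nat_mul_add_intCast_mem_Ioo
    (show ρ - c < b - c by linarith)).and_eventually (eventually_ge_atTop N)).exists
  have hmem : (i : ℝ) * α + c + z ∈ Set.Ico ρ b := ⟨by linarith [hz.1], by linarith [hz.2]⟩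
  refine ⟨i, (isPrefixOf_congr (v' := fun j => w (i + j)) fun j hj => ?_).1 hu⟩
  rw [hN (i + j) (by omega), mechWord_add, ← mechWord_add_intCast (ρ := (i : ℝ) * α + c) z]
  have h₁ := hρb hmem (j + 1) (by simp; omega)
  push_cast at h₁
  exact mechWord_eq_of_floor_eq (hρb hmem j (by simp; omega)).symm h₁.symm

theorem BalancedWord.isFactor_iff_exists_isPrefixOf_mechWord (hw : BalancedWord w)
    (hirr : Irrational α)
    (hfreq : Tendsto (fun n : ℕ => (prefixWeight w n : ℝ) / n) atTop (𝓝 α)) :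
    IsFactor w u ↔ ∃ ρ, IsPrefixOf u (mechWord α ρ) :=
  ⟨hw.exists_isPrefixOf_mechWord hirr hfreq,
    fun ⟨_, hu⟩ => hw.isFactor_of_isPrefixOf_mechWord hirr hfreq hu⟩

end Factors

section Breakpoint

variable {α : ℝ} {j m n : ℕ}

theorem floor_mul_add_intCast_sub_mul (M : ℤ) (h : j + m = n) :
    ⌊(j : ℝ) * α + (M - n * α)⌋ = M - ⌈(m : ℝ) * α⌉ := by
  rw [show (j : ℝ) * α + (M - n * α) = M + -((m : ℝ) * α) by rw [← h]; push_cast; ring,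
    Int.floor_intCast_add, Int.floor_neg, sub_eq_add_neg]

theorem eventually_floor_mul_add_nhdsLT (M : ℤ) (h : j + m = n) :
    ∀ᶠ x in 𝓝[<] ((M : ℝ) - n * α), ⌊(j : ℝ) * α + x⌋ = M - ⌊(m : ℝ) * α⌋ - 1 := by
  have htrans : Tendsto (fun x => (j : ℝ) * α + x) (𝓝[<] ((M : ℝ) - n * α))
      (𝓝[<] ((j : ℝ) * α + (M - n * α))) :=
    (continuous_const_add _).continuousWithinAt.tendsto_nhdsWithin fun x hx => by
      simpa using hx
  refine tendsto_pure.1 ((tendsto_floor_left_pure_ceil_sub_one _).comp htrans) |>.mono ?_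
  intro x hx
  rw [Function.comp_apply] at hx
  rw [hx, show (j : ℝ) * α + (M - n * α) = M + -((m : ℝ) * α) by rw [← h]; push_cast; ring,
    Int.ceil_intCast_add, Int.ceil_neg, ← sub_eq_add_neg]

-- At a breakpoint `M - nα`, the first `n` letters read backwards are those of the upper
-- mechanical word `⌈(m+1)α⌉ - ⌈mα⌉`; just to its left, those of the lower one.
theorem mechWord_intCast_sub_mul (M : ℤ) (h : j + m + 1 = n) :
    mechWord α (M - n * α) j = decide (⌈((m + 1 : ℕ) : ℝ) * α⌉ - ⌈(m : ℝ) * α⌉ = 1) := by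
  have h₀ := floor_mul_add_intCast_sub_mul (α := α) M (show j + (m + 1) = n by omega)
  have h₁ := floor_mul_add_intCast_sub_mul (α := α) M (show (j + 1) + m = n by omega)
  push_cast at h₀ h₁ ⊢
  simp only [mechWord, h₀, h₁]
  congr 1
  apply propext
  omega

theorem eventually_mechWord_nhdsLT (M : ℤ) (h : j + m + 1 = n) :
    ∀ᶠ x in 𝓝[<] ((M : ℝ) - n * α),
      mechWord α x j = decide (⌊((m + 1 : ℕ) : ℝ) * α⌋ - ⌊(m : ℝ) * α⌋ = 1) := by
  filter_upwards [eventually_floor_mul_add_nhdsLT (α := α) M (show j + (m + 1) = n by omega),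
    eventually_floor_mul_add_nhdsLT (α := α) M (show (j + 1) + m = n by omega)] with x h₀ h₁
  push_cast at h₀ h₁ ⊢
  simp only [mechWord, h₀, h₁]
  congr 1
  apply propext
  omega

theorem charWord_eq (k : ℕ) :
    charWord α k = decide (⌊((k + 1 + 1 : ℕ) : ℝ) * α⌋ - ⌊((k + 1 : ℕ) : ℝ) * α⌋ = 1) := by
  simp only [charWord]
  push_cast
  ring_nf

theorem _root_.Irrational.ceil_natCast_mul (hirr : Irrational α) (hm : m ≠ 0) :
    ⌈(m : ℝ) * α⌉ = ⌊(m : ℝ) * α⌋ + 1 :=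
  (Int.ceil_eq_floor_add_one_iff_notMem _).2 fun ⟨z, hz⟩ => (hirr.natCast_mul hm).ne_int z hz.symm

theorem isPrefixOf_reverse_charWord_iff (hirr : Irrational α) (M : ℤ) (s : List Bool) :
    IsPrefixOf s.reverse (charWord α) ↔
      IsPrefixOf s (mechWord α (M - ((s.length + 1 : ℕ) : ℝ) * α)) :=
  isPrefixOf_reverse_iff fun j k h => by
    rw [mechWord_intCast_sub_mul M (m := k + 1) (by omega), charWord_eq,
      hirr.ceil_natCast_mul (by omega), hirr.ceil_natCast_mul (by omega)]
    simp

theorem eventually_isPrefixOf_append_false_iff (h0 : 0 ≤ α) (h1 : α < 1) (M : ℤ)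
    (s : List Bool) : ∀ᶠ x in 𝓝[<] ((M : ℝ) - ((s.length + 1 : ℕ) : ℝ) * α),
      IsPrefixOf (s ++ [false]) (mechWord α x) ↔ IsPrefixOf s.reverse (charWord α) := by
  have hlast := eventually_mechWord_nhdsLT (α := α) M (j := s.length) (m := 0) rfl
  have hletters : ∀ᶠ x in 𝓝[<] ((M : ℝ) - ((s.length + 1 : ℕ) : ℝ) * α),
      ∀ j ∈ Finset.range s.length, mechWord α x j = charWord α (s.length - 1 - j) := by
    refine (Filter.eventually_all_finset _).2 fun j hj => ?_
    rw [Finset.mem_range] at hj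
    filter_upwards [eventually_mechWord_nhdsLT (α := α) M (j := j) (m := s.length - 1 - j + 1)
      (by omega)] with x hx
    rw [hx, charWord_eq]
  filter_upwards [hlast, hletters] with x hx hxs
  have hfloor : ⌊α⌋ = 0 := Int.floor_eq_zero_iff.2 ⟨h0, h1⟩
  rw [isPrefixOf_append_singleton_iff, isPrefixOf_reverse_iff (v' := mechWord α x)]
  · simp [hx, hfloor]
  · intro j k h
    rw [hxs j (by simp; omega)]
    congr 1
    omega

end Breakpoint

section SpecialFactors

variable {α : ℝ}

theorem floor_mul_add_eq_of_mechWord_eq (h0 : 0 ≤ α) (h1 : α ≤ 1) {x y : ℝ} (hxy : ⌊x⌋ = ⌊y⌋)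
    {n : ℕ} (h : ∀ j < n, mechWord α x j = mechWord α y j) :
    ∀ k ≤ n, ⌊(k : ℝ) * α + x⌋ = ⌊(k : ℝ) * α + y⌋ := by
  intro k hk
  induction k with
  | zero => simpa using hxy
  | succ k ih =>
    push_cast
    rw [floor_succ_mul_add h0 h1, floor_succ_mul_add h0 h1, ih (by omega), h k (by omega)]

theorem exists_isPrefixOf_mechWord_intCast_sub (h0 : 0 ≤ α) (h1 : α ≤ 1) {s : List Bool}
    {x y : ℝ} (hx : IsPrefixOf (s ++ [false]) (mechWord α x))
    (hy : IsPrefixOf (s ++ [true]) (mechWord α y)) :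
    ∃ M : ℤ, IsPrefixOf s (mechWord α (M - ((s.length + 1 : ℕ) : ℝ) * α)) := by
  wlog hxy : ⌊x⌋ = ⌊y⌋ generalizing x y
  · exact this (x := Int.fract x) (y := Int.fract y) (by rwa [mechWord_fract])
      (by rwa [mechWord_fract]) (by rw [Int.floor_fract, Int.floor_fract])
  rw [isPrefixOf_append_singleton_iff] at hx hy
  set n := s.length
  have hfloor := floor_mul_add_eq_of_mechWord_eq h0 h1 hxy (n := n) fun j hj => by
    rw [isPrefixOf_iff] at hx hy
    rw [hx.1 j hj, hy.1 j hj]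
  have hxn := floor_succ_mul_add h0 h1 x n
  have hyn := floor_succ_mul_add h0 h1 y n
  simp only [hx.2, hy.2, Bool.toNat_false, Bool.toNat_true, Nat.cast_zero, Nat.cast_one,
    add_zero] at hxn hyn
  -- the breakpoint `θ` where the letter after `s` switches from `a` to `b` lies in `(x, y]`
  set M := ⌊((n : ℝ) + 1) * α + y⌋
  set θ : ℝ := M - ((n + 1 : ℕ) : ℝ) * α
  have hxθ : x < θ := by
    have := Int.lt_floor_add_one (((n : ℝ) + 1) * α + x)
    rw [hxn, hfloor n le_rfl] at this
    have hM : (M : ℝ) = ⌊(n : ℝ) * α + y⌋ + 1 := by exact_mod_cast hyn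
    simp only [θ]
    push_cast
    linarith
  have hθy : θ ≤ y := by
    have := Int.floor_le (((n : ℝ) + 1) * α + y)
    simp only [θ]
    push_cast
    linarith
  have hθ : ∀ k ≤ n, ⌊(k : ℝ) * α + x⌋ = ⌊(k : ℝ) * α + θ⌋ := fun k hk =>
    le_antisymm (Int.floor_mono (by linarith))
      ((Int.floor_mono (by linarith)).trans (hfloor k hk).ge)
  refine ⟨M, (isPrefixOf_congr fun j hj => mechWord_eq_of_floor_eq (hθ j hj.le) ?_).1 hx.1⟩
  exact_mod_cast hθ (j + 1) hj

theorem exists_isPrefixOf_mechWord_append_iff (hirr : Irrational α) (h0 : 0 < α) (h1 : α < 1)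
    (s : List Bool) :
    ((∃ x, IsPrefixOf (s ++ [false]) (mechWord α x)) ∧
      ∃ y, IsPrefixOf (s ++ [true]) (mechWord α y)) ↔ IsPrefixOf s.reverse (charWord α) := by
  constructor
  · rintro ⟨⟨x, hx⟩, y, hy⟩
    obtain ⟨M, hM⟩ := exists_isPrefixOf_mechWord_intCast_sub h0.le h1.le hx hy
    exact (isPrefixOf_reverse_charWord_iff hirr M s).2 hM
  · intro hs
    refine ⟨((eventually_isPrefixOf_append_false_iff h0.le h1 0 s).mono fun x hx => hx.2 hs).exists,
      _, isPrefixOf_append_singleton_iff.2 ⟨(isPrefixOf_reverse_charWord_iff hirr 0 s).1 hs, ?_⟩⟩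
    rw [mechWord_intCast_sub_mul 0 (m := 0) (by omega)]
    simp [Int.ceil_eq_iff, h0, h1.le]

end SpecialFactors

theorem factor_extend_iff_reverse_prefix_char (α : ℝ) (hirr : Irrational α)
    (h0 : 0 < α) (h1 : α < 1) (w : ℕ → Bool) (hw : SturmianWord w)
    (hfreq : Filter.Tendsto
      (fun n : ℕ => (((Finset.range n).filter fun i => w i = true).card : ℝ) / n)
      Filter.atTop (nhds α)) :
    ∀ s : List Bool,
      (IsFactor w (s ++ [false]) ∧ IsFactor w (s ++ [true])) ↔
        IsPrefixOf s.reverse (charWord α) := by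
  intro s
  simp only [hw.1.isFactor_iff_exists_isPrefixOf_mechWord hirr hfreq]
  exact exists_isPrefixOf_mechWord_append_iff hirr h0 h1 s

end StringBricks
end

section
/- Let w : ℕ → {a,b} be a right-infinite binary word that is not balanced. Then there exists a (possibly empty) finite word u over {a,b} such that both a·u·a and b·u·b are factors of w. -/
/-!
Compare two factors `u`, `v` of equal length letter by letter and read the pairs of letters as
steps `+1` (`b` over `a`), `-1` (`a` over `b`) or `0` (equal letters) of the difference of
their weights. If `h(u) ≥ h(v) + 2`, the non-zero steps cannot alternate in sign, so two `+1`
steps follow each other with only `0` steps in between: the common block `m` between them gives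
`b·m·b` in `u` and `a·m·a` in `v`.
-/

namespace StringBricks

theorem IsFactor.of_infix {w : ℕ → Bool} {u l : List Bool} (hu : IsFactor w u)
    (hl : l <:+: u) : IsFactor w l := by
  obtain ⟨i, hi⟩ := hu
  obtain ⟨s, t, rfl⟩ := hl
  refine ⟨i + s.length, fun j => ?_⟩
  have := hi ⟨s.length + j, by simp; omega⟩
  simp only [List.get_eq_getElem, List.append_assoc] at this ⊢
  rw [Nat.add_assoc, this, List.getElem_append_right (by simp),
    List.getElem_append_left (by simp)]
  simp

theorem bordered_infixes_or_of_count_lt (u v : List Bool) (hlen : u.length = v.length)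
    (h : v.count true < u.count true) :
    (∃ m, true :: (m ++ [true]) <:+: u ∧ false :: (m ++ [false]) <:+: v) ∨
      (u.count true = v.count true + 1 ∧
        ∃ m r s, u = m ++ true :: r ∧ v = m ++ false :: s) := by
  induction u generalizing v with
  | nil => simp at h
  | cons x u ih =>
    obtain _ | ⟨y, v⟩ := v
    · simp at hlen
    simp only [List.length_cons, Nat.add_right_cancel_iff] at hlen
    have lift : (∃ m, true :: (m ++ [true]) <:+: u ∧ false :: (m ++ [false]) <:+: v) →
        ∃ m, true :: (m ++ [true]) <:+: x :: u ∧ false :: (m ++ [false]) <:+: y :: v :=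
      fun ⟨m, hu, hv⟩ => ⟨m, List.infix_cons hu, List.infix_cons hv⟩
    simp only [List.count_cons, beq_iff_eq] at h ⊢
    by_cases hxy : x = y
    · subst hxy
      rcases ih v hlen (by omega) with hw | ⟨hc, m, r, s, rfl, rfl⟩
      · exact .inl (lift hw)
      · exact .inr ⟨by omega, x :: m, r, s, rfl, rfl⟩
    obtain ⟨rfl, rfl⟩ | ⟨rfl, rfl⟩ : x = false ∧ y = true ∨ x = true ∧ y = false := by
      cases x <;> cases y <;> simp_all
    all_goals simp only [Bool.false_eq_true, if_true, if_false] at h ⊢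
    · rcases ih v hlen (by omega) with hw | ⟨hc, -⟩
      · exact .inl (lift hw)
      · omega
    · by_cases hlt : v.count true < u.count true
      · rcases ih v hlen hlt with hw | ⟨-, m, r, s, rfl, rfl⟩
        · exact .inl (lift hw)
        · exact .inl ⟨m, ⟨[], r, by simp⟩, ⟨[], s, by simp⟩⟩
      · exact .inr ⟨by omega, [], u, v, rfl, rfl⟩

theorem exists_bordered_infixes_of_count_add_two_le (u v : List Bool)
    (hlen : u.length = v.length) (h : v.count true + 2 ≤ u.count true) :
    ∃ m, true :: (m ++ [true]) <:+: u ∧ false :: (m ++ [false]) <:+: v := by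
  rcases bordered_infixes_or_of_count_lt u v hlen (by omega) with hw | ⟨hc, -⟩
  · exact hw
  · omega

theorem exists_bordered_factors_of_count_add_two_le {w : ℕ → Bool} {u v : List Bool}
    (hu : IsFactor w u) (hv : IsFactor w v) (hlen : u.length = v.length)
    (h : v.count true + 2 ≤ u.count true) :
    ∃ m, IsFactor w (false :: (m ++ [false])) ∧ IsFactor w (true :: (m ++ [true])) :=
  let ⟨m, hmu, hmv⟩ := exists_bordered_infixes_of_count_add_two_le u v hlen h
  ⟨m, hv.of_infix hmv, hu.of_infix hmu⟩

theorem not_balanced_gives_axa_bxb (w : ℕ → Bool) (h : ¬ BalancedWord w) :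
    ∃ u : List Bool,
      IsFactor w (false :: (u ++ [false])) ∧ IsFactor w (true :: (u ++ [true])) := by
  simp only [BalancedWord, not_forall, abs_le, not_and_or, not_le] at h
  obtain ⟨u, v, hu, hv, hlen, hgap | hgap⟩ := h
  · exact exists_bordered_factors_of_count_add_two_le hv hu hlen.symm (by omega)
  · exact exists_bordered_factors_of_count_add_two_le hu hv hlen (by omega)

end StringBricks
end
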